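/- Let G be a finite simple graph and let P = v₀v₁⋯v_k be a path in G such that for each i with 0 < i < k, there is no path from v_{i−1} to v_{i+1} in G − v_i. Then for every vertex x of G, in the graph G − x the following holds: for each connected component C of G − x, the set ({v₀, …, v_k} − {x}) ∩ V(C) is either empty or is the vertex set of a path u₀u₁⋯u_m of C such that for each 0 < j < m there is no path from u_{j−1} to u_{j+1} in (G − x) − u_j. In particular, if x = v_i for some 0 < i < k, then v_{i−1} and v_{i+1} lie in distinct components of G − v_i, and the subpaths v₀⋯v_{i−1} and v_{i+1}⋯v_k each retain the separation property in G − v_i. -/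

import Mathlib

/-! If `x` is not on the admissible path `v₀ ⋯ v_k`, the whole path lies in one component of
`G − x` and stays admissible there, as walks avoiding `x` are walks of `G`. If `x = v_i`, the
subpaths `v₀ ⋯ v_{i-1}` and `v_{i+1} ⋯ v_k` inherit admissibility, each lies in one component
of `G − v_i`, and these components differ: a walk from `v_{i-1}` to `v_{i+1}` avoiding `v_i`
is exactly what admissibility at `i` forbids. -/

/-- `a` and `b` are joined by a path of `G` avoiding the vertex `x`, i.e. they are
connected in `G − x`. -/
def ReachAvoiding {V : Type*} (G : SimpleGraph V) (x a b : V) : Prop :=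
  ∃ q : G.Walk a b, x ∉ q.support

/-- The list of vertices `m` has the separation property in `G − x`: for each internal
index `j`, there is no path from `m_{j−1}` to `m_{j+1}` in `(G − x) − m_j`, i.e. every
walk between them in `G` avoiding `x` passes through `m_j`. -/
def SepPropAvoiding {V : Type*} (G : SimpleGraph V) (x : V) (m : List V) : Prop :=
  ∀ j : ℕ, 0 < j → ∀ hj : j + 1 < m.length,
    ∀ q : G.Walk (m.get ⟨j - 1, by omega⟩) (m.get ⟨j + 1, hj⟩),
      x ∉ q.support → m.get ⟨j, by omega⟩ ∈ q.support

namespace ReachAvoiding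

variable {V : Type*} {G : SimpleGraph V} {x a b c : V}

theorem refl (ha : a ≠ x) : ReachAvoiding G x a a :=
  ⟨.nil, by simpa using ha.symm⟩

theorem symm (h : ReachAvoiding G x a b) : ReachAvoiding G x b a :=
  let ⟨q, hq⟩ := h
  ⟨q.reverse, by simpa using hq⟩

theorem trans (h : ReachAvoiding G x a b) (h' : ReachAvoiding G x b c) :
    ReachAvoiding G x a c :=
  let ⟨q, hq⟩ := h
  let ⟨q', hq'⟩ := h'
  ⟨q.append q', by
    rw [SimpleGraph.Walk.support_append, List.mem_append]
    exact fun h ↦ h.elim hq (hq' ∘ List.mem_of_mem_tail)⟩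

theorem concat (h : ReachAvoiding G x a b) (hbc : G.Adj b c) (hc : c ≠ x) :
    ReachAvoiding G x a c :=
  let ⟨q, hq⟩ := h
  ⟨q.concat hbc, by simpa [SimpleGraph.Walk.support_concat, hq] using hc.symm⟩

end ReachAvoiding

section

variable {V : Type*} {G : SimpleGraph V} {x a b : V} {m : List V}

theorem reachAvoiding_of_isChain (hm : m.IsChain G.Adj) (hx : ∀ v ∈ m, v ≠ x)
    (ha : a ∈ m) (hb : b ∈ m) : ReachAvoiding G x a b := by
  have hne : m ≠ [] := List.ne_nil_of_mem ha
  have hhead : ∀ v ∈ m, ReachAvoiding G x (m.head hne) v :=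
    (List.IsChain.iff_mem.1 hm).induction _ _
      (fun _ v ⟨_, hv, hadj⟩ h ↦ h.concat hadj (hx v hv))
      (fun _ ↦ .refl (hx _ (List.head_mem hne)))
  exact (hhead a ha).symm.trans (hhead b hb)

end

namespace SepPropAvoiding

variable {V : Type*} {G : SimpleGraph V} {x : V} {m : List V}

theorem take (h : SepPropAvoiding G x m) (i : ℕ) : SepPropAvoiding G x (m.take i) := by
  intro j hj hjl q hq
  simp only [List.length_take, lt_min_iff] at hjl
  have := h j hj hjl.2 (q.copy (by simp) (by simp)) (by simpa using hq)
  simpa using this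

theorem drop (h : SepPropAvoiding G x m) (i : ℕ) : SepPropAvoiding G x (m.drop i) := by
  intro j hj hjl q hq
  simp only [List.length_drop] at hjl
  have := h (i + j) (by omega) (by omega)
    (q.copy (by simp only [List.get_eq_getElem, List.getElem_drop]; congr 1; omega)
      (by simp only [List.get_eq_getElem, List.getElem_drop]; rfl))
    (by simpa using hq)
  simpa using this

end SepPropAvoiding

/-- The paper's admissible path, in `G − x`. -/
structure IsAdmissibleAvoiding {V : Type*} (G : SimpleGraph V) (x : V) (m : List V) : Prop where
  nodup : m.Nodup
  isChain : m.IsChain G.Adj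
  ne_of_mem : ∀ v ∈ m, v ≠ x
  sep : SepPropAvoiding G x m

namespace IsAdmissibleAvoiding

variable {V : Type*} {G : SimpleGraph V} {x : V}

theorem nil : IsAdmissibleAvoiding G x [] :=
  ⟨List.nodup_nil, .nil, by simp, fun _ _ hj ↦ by simp at hj⟩

theorem reachAvoiding {m : List V} (h : IsAdmissibleAvoiding G x m) {a b : V} (ha : a ∈ m)
    (hb : b ∈ m) : ReachAvoiding G x a b :=
  reachAvoiding_of_isChain h.isChain h.ne_of_mem ha hb

end IsAdmissibleAvoiding

section Trace

variable {V : Type*} {G : SimpleGraph V} {x a c : V} {t d : List V}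

theorem inter_reachAvoiding_eq_of_reach (ht : IsAdmissibleAvoiding G x t)
    (hd : ∀ b ∈ d, ¬ ReachAvoiding G x c b) (ha : a ∈ t) (hca : ReachAvoiding G x c a) :
    ({v | v ∈ t} ∪ {v | v ∈ d}) ∩ {y | ReachAvoiding G x c y} = {v | v ∈ t} := by
  ext y
  simp only [Set.mem_inter_iff, Set.mem_union, Set.mem_ofPred_eq]
  exact ⟨fun ⟨hy, hcy⟩ ↦ hy.resolve_right fun hyd ↦ hd y hyd hcy,
    fun hy ↦ ⟨.inl hy, hca.trans (ht.reachAvoiding ha hy)⟩⟩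

theorem inter_reachAvoiding_eq_empty_or_admissible {S : Set V}
    (hS : S = {v | v ∈ t} ∪ {v | v ∈ d}) (ht : IsAdmissibleAvoiding G x t)
    (hd : IsAdmissibleAvoiding G x d) (hsplit : ∀ a ∈ t, ∀ b ∈ d, ¬ ReachAvoiding G x a b)
    (c : V) :
    S ∩ {y | ReachAvoiding G x c y} = ∅ ∨
      ∃ m, IsAdmissibleAvoiding G x m ∧ {v | v ∈ m} = S ∩ {y | ReachAvoiding G x c y} := by
  subst hS
  by_cases hT : ∃ a ∈ t, ReachAvoiding G x c a
  · obtain ⟨a, ha, hca⟩ := hT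
    have hD : ∀ b ∈ d, ¬ ReachAvoiding G x c b := fun b hb hcb ↦ hsplit a ha b hb (hca.symm.trans hcb)
    exact .inr ⟨t, ht, (inter_reachAvoiding_eq_of_reach ht hD ha hca).symm⟩
  by_cases hD : ∃ b ∈ d, ReachAvoiding G x c b
  · obtain ⟨b, hb, hcb⟩ := hD
    push Not at hT
    refine .inr ⟨d, hd, ?_⟩
    rw [Set.union_comm, inter_reachAvoiding_eq_of_reach hd hT hb hcb]
  · push Not at hT hD
    refine .inl (Set.eq_empty_of_forall_notMem fun y ⟨hy, hcy⟩ ↦ ?_)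
    exact hy.elim (hT y · hcy) (hD y · hcy)

end Trace

section Cut

variable {V : Type*} {G : SimpleGraph V} {l : List V} {i : ℕ}

theorem eq_take_append_getElem_cons_drop (hi : i < l.length) :
    l = l.take i ++ l[i] :: l.drop (i + 1) := by
  rw [List.getElem_cons_drop, List.take_append_drop]

theorem getElem_notMem_take_and_drop (hl : l.Nodup) (hi : i < l.length) :
    l[i] ∉ l.take i ∧ l[i] ∉ l.drop (i + 1) := by
  have h := eq_take_append_getElem_cons_drop hi
  generalize l[i] = x, l.take i = t, l.drop (i + 1) = d at h ⊢
  subst h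
  rw [List.nodup_append, List.nodup_cons] at hl
  exact ⟨fun hx ↦ hl.2.2 x hx x List.mem_cons_self rfl, hl.2.1.1⟩

theorem setOf_mem_diff_getElem (hl : l.Nodup) (hi : i < l.length) :
    {v | v ∈ l} \ {l[i]} = {v | v ∈ l.take i} ∪ {v | v ∈ l.drop (i + 1)} := by
  have h := eq_take_append_getElem_cons_drop hi
  generalize l[i] = x, l.take i = t, l.drop (i + 1) = d at h ⊢
  subst h
  rw [List.nodup_append, List.nodup_cons] at hl
  ext v
  simp only [Set.mem_sdiff, Set.mem_ofPred_eq, Set.mem_singleton_iff, Set.mem_union,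
    List.mem_append, List.mem_cons]
  grind

theorem isAdmissibleAvoiding_take_and_drop (hl : l.Nodup) (hchain : l.IsChain G.Adj)
    (hi : i < l.length) (hsep : SepPropAvoiding G l[i] l) :
    IsAdmissibleAvoiding G l[i] (l.take i) ∧ IsAdmissibleAvoiding G l[i] (l.drop (i + 1)) := by
  obtain ⟨ht, hd⟩ := getElem_notMem_take_and_drop hl hi
  exact ⟨⟨(List.take_sublist _ _).nodup hl, hchain.take i, fun v hv h ↦ ht (h ▸ hv), hsep.take i⟩,
    ⟨(List.drop_sublist _ _).nodup hl, hchain.drop _, fun v hv h ↦ hd (h ▸ hv), hsep.drop _⟩⟩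

theorem not_reachAvoiding_of_mem_take_of_mem_drop (hl : l.Nodup) (hchain : l.IsChain G.Adj)
    (hi : i < l.length)
    (hcut : ∀ (h0 : 0 < i) (hi' : i + 1 < l.length), ¬ ReachAvoiding G l[i] l[i - 1] l[i + 1])
    {a b : V} (ha : a ∈ l.take i) (hb : b ∈ l.drop (i + 1)) : ¬ ReachAvoiding G l[i] a b := by
  obtain ⟨ht, hd⟩ := getElem_notMem_take_and_drop hl hi
  have h0 : 0 < i := Nat.pos_of_ne_zero (by rintro rfl; simp at ha)
  have hi' : i + 1 < l.length := by
    by_contra h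
    simp [List.drop_eq_nil_of_le (not_lt.1 h)] at hb
  have hprev : l[i - 1] ∈ l.take i := List.mem_take_iff_getElem.2 ⟨i - 1, by omega, rfl⟩
  have hnext : l[i + 1] ∈ l.drop (i + 1) := List.mem_drop_iff_getElem.2 ⟨0, by omega, rfl⟩
  have hreach_t : ReachAvoiding G l[i] l[i - 1] a :=
    reachAvoiding_of_isChain (hchain.take i) (fun v hv h ↦ ht (h ▸ hv)) hprev ha
  have hreach_d : ReachAvoiding G l[i] b l[i + 1] :=
    reachAvoiding_of_isChain (hchain.drop (i + 1)) (fun v hv h ↦ hd (h ▸ hv)) hb hnext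
  exact fun hab ↦ hcut h0 hi' (hreach_t.trans (hab.trans hreach_d))

end Cut

/-- Let `P = v₀v₁⋯v_k` be a path of `G` such that for each `0 < i < k`
there is no path from `v_{i−1}` to `v_{i+1}` in `G − v_i`. Then for every vertex `x`:
(1) for every connected component of `G − x` (described as the set of vertices reachable
from some vertex `c ≠ x` by walks avoiding `x`), the intersection of `{v₀, …, v_k} − {x}`
with the component is empty or is the vertex set of a path of the component having the
separation property in `G − x`; and
(2) if `x = v_i` for some `0 < i < k`, then `v_{i−1}` and `v_{i+1}` lie in distinct
components of `G − v_i`, and the subpaths `v₀⋯v_{i−1}` and `v_{i+1}⋯v_k` each retain the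
separation property in `G − v_i`. -/
theorem stmt6 {V : Type*} (G : SimpleGraph V) (l : List V)
    (hchain : l.Chain' G.Adj) (hnodup : l.Nodup)
    (hsep : ∀ i : ℕ, 0 < i → ∀ hi : i + 1 < l.length,
      ∀ q : G.Walk (l.get ⟨i - 1, by omega⟩) (l.get ⟨i + 1, hi⟩),
        l.get ⟨i, by omega⟩ ∈ q.support) :
    ∀ x : V,
      ((∀ c : V, c ≠ x →
        ({v | v ∈ l} \ {x}) ∩ {y | ReachAvoiding G x c y} = ∅ ∨
        ∃ m : List V, m.Nodup ∧ m.Chain' G.Adj ∧ (∀ v ∈ m, v ≠ x) ∧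
          {v | v ∈ m} = ({v | v ∈ l} \ {x}) ∩ {y | ReachAvoiding G x c y} ∧
          SepPropAvoiding G x m) ∧
      (∀ i : ℕ, 0 < i → ∀ hi : i + 1 < l.length, x = l.get ⟨i, by omega⟩ →
        ¬ ReachAvoiding G x (l.get ⟨i - 1, by omega⟩) (l.get ⟨i + 1, hi⟩) ∧
        SepPropAvoiding G x (l.take i) ∧ SepPropAvoiding G x (l.drop (i + 1)))) := by
  have hsepx : ∀ y, SepPropAvoiding G y l := fun _ j hj hjl q _ ↦ hsep j hj hjl q
  have hcut : ∀ i (h0 : 0 < i) (hi : i + 1 < l.length),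
      ¬ ReachAvoiding G l[i] l[i - 1] l[i + 1] :=
    fun i h0 hi ⟨q, hq⟩ ↦ hq (hsep i h0 hi q)
  intro x
  refine ⟨fun c _ ↦ ?_, fun i h0 hi hx ↦ ?_⟩
  · suffices ({v | v ∈ l} \ {x}) ∩ {y | ReachAvoiding G x c y} = ∅ ∨
        ∃ m, IsAdmissibleAvoiding G x m ∧
          {v | v ∈ m} = ({v | v ∈ l} \ {x}) ∩ {y | ReachAvoiding G x c y} by
      obtain h | ⟨m, hm, hmS⟩ := this
      exacts [.inl h, .inr ⟨m, hm.nodup, hm.isChain, hm.ne_of_mem, hmS, hm.sep⟩]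
    by_cases hxl : x ∈ l
    · obtain ⟨i, hi, rfl⟩ := List.getElem_of_mem hxl
      obtain ⟨ht, hd⟩ := isAdmissibleAvoiding_take_and_drop hnodup hchain hi (hsepx _)
      exact inter_reachAvoiding_eq_empty_or_admissible (setOf_mem_diff_getElem hnodup hi) ht hd
        (fun a ha b hb ↦ not_reachAvoiding_of_mem_take_of_mem_drop hnodup hchain hi
          (hcut i) ha hb) c
    · have hl : IsAdmissibleAvoiding G x l :=
        ⟨hnodup, hchain, fun v hv h ↦ hxl (h ▸ hv), hsepx x⟩
      exact inter_reachAvoiding_eq_empty_or_admissible (by simpa using hxl) hl .nil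
        (by simp) c
  · subst hx
    exact ⟨hcut i h0 hi, (hsepx _).take i, (hsepx _).drop (i + 1)⟩
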